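/- arXiv:1611.08932 — 2 statements merged into one kernel-verified Lean document; each statement's English description precedes it below -/
import Mathlib

section
/- Fix a complex n×n matrix S and define φ_S(A) = ∫_{U(n)} e^{i Tr(S U A U*)} dU for A ∈ Herm(n), where dU is normalized Haar measure on U(n). Then for all Hermitian matrices A, B and every unitary matrix U₁ ∈ U(n), one has ∫_{U(n)} φ_S(A + U₁ V B V* U₁*) dV = φ_S(A) · φ_S(B); in particular φ_S is a spherical function for the Gelfand pair (U(n) ⋉ Herm(n), U(n)). -/
open MeasureTheory Matrix Complex Finset

noncomputable section

instance matrixMeasurableSpace (n : ℕ) : MeasurableSpace (Matrix (Fin n) (Fin n) ℂ) :=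
  inferInstanceAs (MeasurableSpace (Fin n → Fin n → ℂ))

/-- Build a Hermitian matrix from coordinates: diagonal entries and real/imaginary
parts of the strictly upper-triangular entries. -/
def matrixOfCoords (n : ℕ)
    (c : (Fin n → ℝ) × ({p : Fin n × Fin n // p.1 < p.2} → ℝ) ×
      ({p : Fin n × Fin n // p.1 < p.2} → ℝ)) :
    Matrix (Fin n) (Fin n) ℂ :=
  Matrix.of fun j k =>
    if h : j < k then (c.2.1 ⟨(j, k), h⟩ : ℂ) + (c.2.2 ⟨(j, k), h⟩ : ℝ) * Complex.I
    else if h' : k < j then (c.2.1 ⟨(k, j), h'⟩ : ℂ) - (c.2.2 ⟨(k, j), h'⟩ : ℝ) * Complex.I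
    else (c.1 j : ℂ)

/-- Lebesgue measure `dX` on the space of Hermitian matrices, viewed as a measure on all
complex matrices supported on Hermitian ones. -/
def hermMeasure (n : ℕ) : Measure (Matrix (Fin n) (Fin n) ℂ) :=
  Measure.map (matrixOfCoords n) volume

/-- The spherical function `φ_s(X) = ∫_{U(n)} e^{i Tr(S U X U*)} dU`. -/
def sphericalFn (n : ℕ) (μU : Measure (Matrix.unitaryGroup (Fin n) ℂ))
    (s : Fin n → ℝ) (X : Matrix (Fin n) (Fin n) ℂ) : ℂ :=
  ∫ U : Matrix.unitaryGroup (Fin n) ℂ,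
    Complex.exp (Complex.I *
      (Matrix.diagonal (fun j => (s j : ℂ)) * (U : Matrix (Fin n) (Fin n) ℂ) * X *
        star (U : Matrix (Fin n) (Fin n) ℂ)).trace) ∂μU

/-- The spherical transform `f̂(s) = ∫ f(X) φ_s(−X) dX`. -/
def sphericalTransform (n : ℕ) (μU : Measure (Matrix.unitaryGroup (Fin n) ℂ))
    (f : Matrix (Fin n) (Fin n) ℂ → ℝ) (s : Fin n → ℝ) : ℂ :=
  ∫ X, (f X : ℂ) * sphericalFn n μU s (-X) ∂(hermMeasure n)

/-- Vandermonde determinant `Δ_n(x) = ∏_{j<k} (x_k - x_j)`. -/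
def vdm (n : ℕ) (x : Fin n → ℝ) : ℝ :=
  ∏ j : Fin n, ∏ k ∈ Finset.Ioi j, (x k - x j)

/-!
Write `e_A(U) = exp (i Tr(S U A U*))`, so that `φ A = ∫ e_A`. Since the trace is additive,
`e_{A + W B W*}(U) = e_A(U) · e_B(U W)`, hence the left-hand side is the double integral
`∫_V ∫_U e_A(U) e_B(U U₁ V) dU dV`. Exchanging the integrals (Fubini on the compact group
`U(n)`), left invariance of Haar measure turns the inner integral over `V` into `φ B`.
-/

instance Matrix.instSecondCountableTopology {m n R : Type*} [Fintype m] [Fintype n]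
    [TopologicalSpace R] [SecondCountableTopology R] : SecondCountableTopology (Matrix m n R) :=
  inferInstanceAs (SecondCountableTopology (m → n → R))

instance Matrix.unitaryGroup.instSecondCountableTopology {α m : Type*} [CommRing α] [StarRing α]
    [TopologicalSpace α] [SecondCountableTopology α] [Fintype m] [DecidableEq m] :
    SecondCountableTopology (unitaryGroup m α) :=
  TopologicalSpace.Subtype.secondCountableTopology _

instance matrixBorelSpace (n : ℕ) : BorelSpace (Matrix (Fin n) (Fin n) ℂ) :=
  inferInstanceAs (BorelSpace (Fin n → Fin n → ℂ))

instance Matrix.unitaryGroup.instCompactSpace {𝕜 m : Type*} [RCLike 𝕜] [Fintype m]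
    [DecidableEq m] : CompactSpace (unitaryGroup m 𝕜) := by
  have hclosed : IsClosed (unitaryGroup m 𝕜 : Set (Matrix m m 𝕜)) := isClosed_unitary
  open scoped Matrix.Norms.Elementwise in
  exact isCompact_iff_compactSpace.mp <| Metric.isCompact_of_isClosed_isBounded hclosed <|
    Metric.isBounded_closedBall.subset fun _ hU =>
      mem_closedBall_zero_iff.mpr (entrywise_sup_norm_bound_of_unitary hU)

theorem integral_integral_mul_comp_mul_eq_mul_integral {G 𝕜 : Type*} [Group G] [TopologicalSpace G]
    [ContinuousMul G] [CompactSpace G] [SecondCountableTopology G] [MeasurableSpace G]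
    [BorelSpace G] [RCLike 𝕜] (μ : Measure G) [IsFiniteMeasure μ] [μ.IsMulLeftInvariant]
    {f g : G → 𝕜} (hf : Continuous f) (hg : Continuous g) (W : G) :
    ∫ V, ∫ U, f U * g (U * W * V) ∂μ ∂μ = (∫ U, f U ∂μ) * ∫ V, g V ∂μ := by
  have hint : Integrable (Function.uncurry fun V U => f U * g (U * W * V)) (μ.prod μ) :=
    (by fun_prop : Continuous fun p : G × G => f p.2 * g (p.2 * W * p.1))
      |>.integrable_of_hasCompactSupport (HasCompactSupport.of_compactSpace _)
  calc ∫ V, ∫ U, f U * g (U * W * V) ∂μ ∂μ = ∫ U, f U * ∫ V, g (U * W * V) ∂μ ∂μ := by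
        simp only [integral_integral_swap hint, integral_const_mul]
    _ = ∫ U, f U * ∫ V, g V ∂μ ∂μ := by
        congr 1 with U
        rw [integral_mul_left_eq_self g (U * W)]
    _ = (∫ U, f U ∂μ) * ∫ V, g V ∂μ := integral_mul_const _ _

section ExpTraceConj

variable {m : Type*} [Fintype m]

def expTraceConj (S A U : Matrix m m ℂ) : ℂ :=
  exp (I * (S * U * A * star U).trace)

theorem expTraceConj_add_conj (S A B U W : Matrix m m ℂ) :
    expTraceConj S (A + W * B * star W) U = expTraceConj S A U * expTraceConj S B (U * W) := by
  have hsplit : S * U * (A + W * B * star W) * star U =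
      S * U * A * star U + S * (U * W) * B * star (U * W) := by
    simp only [star_mul]
    noncomm_ring
  rw [expTraceConj, hsplit, trace_add, mul_add, exp_add, expTraceConj, expTraceConj]

theorem continuous_expTraceConj (S A : Matrix m m ℂ) : Continuous (expTraceConj S A) := by
  unfold expTraceConj
  fun_prop

end ExpTraceConj

theorem sphericalFn_functional_equation_general
    (n : ℕ) (μU : Measure (Matrix.unitaryGroup (Fin n) ℂ))
    [IsProbabilityMeasure μU] [μU.IsMulLeftInvariant]
    (S : Matrix (Fin n) (Fin n) ℂ)
    (φ : Matrix (Fin n) (Fin n) ℂ → ℂ)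
    (hφ : ∀ A, φ A = ∫ U : Matrix.unitaryGroup (Fin n) ℂ,
      Complex.exp (Complex.I *
        (S * (U : Matrix (Fin n) (Fin n) ℂ) * A * star (U : Matrix (Fin n) (Fin n) ℂ)).trace) ∂μU)
    (A B : Matrix (Fin n) (Fin n) ℂ)
    (U₁ : Matrix.unitaryGroup (Fin n) ℂ) :
    ∫ V : Matrix.unitaryGroup (Fin n) ℂ,
        φ (A + (U₁ : Matrix (Fin n) (Fin n) ℂ) * (V : Matrix (Fin n) (Fin n) ℂ) * B *
          star (V : Matrix (Fin n) (Fin n) ℂ) * star (U₁ : Matrix (Fin n) (Fin n) ℂ)) ∂μU =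
      φ A * φ B := by
  let e (X : Matrix (Fin n) (Fin n) ℂ) (U : unitaryGroup (Fin n) ℂ) : ℂ :=
    expTraceConj S X (U : Matrix (Fin n) (Fin n) ℂ)
  have he : ∀ X, Continuous (e X) := fun X =>
    (continuous_expTraceConj S X).comp continuous_subtype_val
  have hφe : ∀ X, φ X = ∫ U, e X U ∂μU := hφ
  have hsplit : ∀ U V : unitaryGroup (Fin n) ℂ,
      e (A + (U₁ : Matrix (Fin n) (Fin n) ℂ) * V * B * star (V : Matrix (Fin n) (Fin n) ℂ) *
        star (U₁ : Matrix (Fin n) (Fin n) ℂ)) U = e A U * e B (U * U₁ * V) := by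
    intro U V
    have hconj := expTraceConj_add_conj S A B U (U₁ * V : unitaryGroup (Fin n) ℂ)
    simp only [Submonoid.coe_mul, star_mul, ← Matrix.mul_assoc] at hconj
    simpa only [e, Submonoid.coe_mul] using hconj
  simp only [hφe, hsplit]
  exact integral_integral_mul_comp_mul_eq_mul_integral μU (he A) (he B) U₁

/-- The function `φ_S(A) = ∫_{U(n)} e^{i Tr(S U A U*)} dU` satisfies the
spherical functional equation `∫_{U(n)} φ_S(A + U₁ V B V* U₁*) dV = φ_S(A) φ_S(B)` for all
Hermitian `A`, `B` and every unitary `U₁`, i.e. it is a spherical function for the Gelfand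
pair `(U(n) ⋉ Herm(n), U(n))`. -/
theorem sphericalFn_functional_equation
    (n : ℕ) (μU : Measure (Matrix.unitaryGroup (Fin n) ℂ))
    [IsProbabilityMeasure μU] [μU.IsMulLeftInvariant]
    (S : Matrix (Fin n) (Fin n) ℂ)
    (φ : Matrix (Fin n) (Fin n) ℂ → ℂ)
    (hφ : ∀ A, φ A = ∫ U : Matrix.unitaryGroup (Fin n) ℂ,
      Complex.exp (Complex.I *
        (S * (U : Matrix (Fin n) (Fin n) ℂ) * A * star (U : Matrix (Fin n) (Fin n) ℂ)).trace) ∂μU)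
    (A B : Matrix (Fin n) (Fin n) ℂ) (hA : A.IsHermitian) (hB : B.IsHermitian)
    (U₁ : Matrix.unitaryGroup (Fin n) ℂ) :
    ∫ V : Matrix.unitaryGroup (Fin n) ℂ,
        φ (A + (U₁ : Matrix (Fin n) (Fin n) ℂ) * (V : Matrix (Fin n) (Fin n) ℂ) * B *
          star (V : Matrix (Fin n) (Fin n) ℂ) * star (U₁ : Matrix (Fin n) (Fin n) ℂ)) ∂μU =
      φ A * φ B :=
  sphericalFn_functional_equation_general n μU S φ hφ A B U₁
end
end

section
/- Fix an integer n ≥ 1 and α > −1, and let L be the operator (Lf)(x) = (1/Γ(α+n)) ∫_0^∞ s^{α+n−1} e^{−s} f(x+s) ds. Let p_k be a monic polynomial of degree k and define P_k(x) = ∑_{j=0}^{k} (−1)^j binom(α+n, j) p_k^{(j)}(x). Then P_k is a monic polynomial of degree k and L(P_k) = p_k. -/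
/-!
Write `β = α + n > 0` and `D` for differentiation. Expanding `f (x + s)` in its Taylor
series and integrating termwise against `s ^ (β - 1) e ^ (-s) / Γ(β)` shows that on
polynomials `L` acts as `(1 - D) ^ (-β) = ∑ (β)ₘ / m! Dᵐ`, while `P_k` is `(1 - D) ^ β p_k`
with the series truncated after `Dᵏ`. Since `D ^ (k + 1)` kills `p_k`, only the product of
the two truncations modulo `X ^ (k + 1)` matters, and it is `1` because the binomial series
satisfy `(1 - X) ^ (-β) (1 - X) ^ β = 1` (Chu–Vandermonde).
-/

open MeasureTheory Finset

noncomputable section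

/-- Generalized binomial coefficient `binom(β, j) = β(β-1)⋯(β-j+1)/j!`. -/
def gbinom (β : ℝ) (j : ℕ) : ℝ := (∏ i ∈ Finset.range j, (β - i)) / (j.factorial : ℝ)

/-- The operator `(Lf)(x) = (1/Γ(α+n)) ∫_0^∞ s^{α+n-1} e^{-s} f(x+s) ds`. -/
def Lop (n : ℕ) (α : ℝ) (f : ℝ → ℝ) (x : ℝ) : ℝ :=
  (1 / Real.Gamma (α + n)) *
    ∫ s in Set.Ioi (0 : ℝ), s ^ (α + n - 1) * Real.exp (-s) * f (x + s)

open Polynomial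

namespace Polynomial

section Degree

variable {R : Type*} [Semiring R]

theorem degree_iterate_derivative_le (p : R[X]) (i : ℕ) :
    (derivative^[i] p).degree ≤ p.degree := by
  induction i with
  | zero => rfl
  | succ i ih =>
    rw [Function.iterate_succ_apply']
    exact degree_derivative_le.trans ih

theorem degree_sum_C_mul_iterate_derivative_succ_lt {p : R[X]} (hp : p ≠ 0) (c : ℕ → R)
    (s : Finset ℕ) : (∑ i ∈ s, C (c i) * derivative^[i + 1] p).degree < p.degree := by
  rw [degree_eq_natDegree hp, ← mem_degreeLT]
  refine Submodule.sum_mem _ fun i _ => ?_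
  rw [C_mul']
  refine Submodule.smul_mem _ _ (mem_degreeLT.2 ?_)
  calc (derivative^[i + 1] p).degree
      ≤ (derivative p).degree := by
        rw [Function.iterate_succ_apply]; exact degree_iterate_derivative_le _ _
    _ < p.degree := degree_derivative_lt hp
    _ = p.natDegree := degree_eq_natDegree hp

end Degree

section DerivativeOperator

variable {R : Type*} [CommRing R]

theorem aeval_derivative_apply_eq_sum_range' {Q : R[X]} {N : ℕ} (hQ : Q.natDegree < N)
    (p : R[X]) :
    aeval (derivative : Module.End R R[X]) Q p =
      ∑ i ∈ range N, Q.coeff i • derivative^[i] p := by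
  simp [aeval_eq_sum_range' hQ, Module.End.pow_apply]

theorem aeval_derivative_apply_eq_of_X_pow_dvd_sub {Q₁ Q₂ p : R[X]} {N : ℕ}
    (hQ : X ^ N ∣ Q₁ - Q₂) (hp : p.natDegree < N) :
    aeval (derivative : Module.End R R[X]) Q₁ p = aeval derivative Q₂ p := by
  obtain ⟨S, hS⟩ := hQ
  rw [← sub_eq_zero, ← LinearMap.sub_apply, ← map_sub, hS, mul_comm, map_mul,
    Module.End.mul_apply, map_pow, aeval_X, Module.End.pow_apply, iterate_derivative_eq_zero hp,
    map_zero]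

end DerivativeOperator

theorem X_pow_dvd_sub_trunc {R : Type*} [CommRing R] (Q : R[X]) (n : ℕ) :
    X ^ n ∣ Q - PowerSeries.trunc n (Q : PowerSeries R) := by
  refine X_pow_dvd_iff.2 fun d hd => ?_
  simp [PowerSeries.coeff_trunc, hd]

end Polynomial

namespace PowerSeries

variable {R : Type*} [CommRing R] [BinomialRing R]

/-- The binomial series `(1 - X) ^ r`. -/
def oneSubPow (r : R) : PowerSeries R := rescale (-1) (binomialSeries R r)

theorem coeff_oneSubPow (r : R) (n : ℕ) :
    coeff n (oneSubPow r) = (-1) ^ n * Ring.choose r n := by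
  simp [oneSubPow, coeff_rescale]

theorem oneSubPow_add (r s : R) : oneSubPow (r + s) = oneSubPow r * oneSubPow s := by
  simp [oneSubPow]

theorem oneSubPow_zero : oneSubPow (0 : R) = 1 := by
  simp [oneSubPow]

theorem X_pow_dvd_trunc_oneSubPow_neg_mul_trunc_oneSubPow_sub_one (r : R) (n : ℕ) :
    Polynomial.X ^ (n + 1) ∣
      trunc (n + 1) (oneSubPow (-r)) * trunc (n + 1) (oneSubPow r) - 1 := by
  simpa [trunc_trunc_mul_trunc, ← oneSubPow_add, oneSubPow_zero, trunc_one] using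
    Polynomial.X_pow_dvd_sub_trunc
      (trunc (n + 1) (oneSubPow (-r)) * trunc (n + 1) (oneSubPow r)) (n + 1)

end PowerSeries

open PowerSeries (oneSubPow trunc)

theorem gbinom_eq_choose (β : ℝ) (j : ℕ) : gbinom β j = Ring.choose β j := by
  rw [Ring.choose_eq_smul, gbinom, ← descPochhammer_eval_eq_prod_range, smul_eq_mul,
    div_eq_inv_mul, ← descPochhammer_map (algebraMap ℤ ℝ), eval_map_algebraMap,
    aeval_eq_smeval]

theorem coeff_oneSubPow_neg (β : ℝ) (m : ℕ) :
    PowerSeries.coeff m (oneSubPow (-β)) = (ascPochhammer ℝ m).eval β / m.factorial := by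
  rw [PowerSeries.coeff_oneSubPow, Ring.choose_eq_smul, ← aeval_eq_smeval,
    ← eval_map_algebraMap, descPochhammer_map, ← neg_neg β,
    ascPochhammer_eval_neg_eq_descPochhammer, neg_neg, smul_eq_mul]
  ring

theorem Real.Gamma_add_nat {β : ℝ} (hβ : 0 < β) (m : ℕ) :
    Real.Gamma (β + m) = (ascPochhammer ℝ m).eval β * Real.Gamma β := by
  induction m with
  | zero => simp
  | succ m ih =>
    rw [Nat.cast_succ, ← add_assoc, Real.Gamma_add_one (by positivity), ih,
      ascPochhammer_succ_eval]
    ring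

theorem rpow_mul_exp_neg_mul_pow_eqOn (β : ℝ) (m : ℕ) :
    Set.EqOn (fun s : ℝ => s ^ (β - 1) * Real.exp (-s) * s ^ m)
      (fun s => Real.exp (-s) * s ^ (β + m - 1)) (Set.Ioi 0) := by
  intro s (hs : 0 < s)
  dsimp only
  rw [show β + m - 1 = β - 1 + m by ring, Real.rpow_add hs, Real.rpow_natCast]
  ring

theorem integrableOn_rpow_mul_exp_neg_mul_pow {β : ℝ} (hβ : 0 < β) (m : ℕ) :
    IntegrableOn (fun s : ℝ => s ^ (β - 1) * Real.exp (-s) * s ^ m) (Set.Ioi 0) :=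
  (Real.GammaIntegral_convergent (by positivity)).congr_fun
    (rpow_mul_exp_neg_mul_pow_eqOn β m).symm measurableSet_Ioi

theorem integral_rpow_mul_exp_neg_mul_pow {β : ℝ} (hβ : 0 < β) (m : ℕ) :
    ∫ s in Set.Ioi (0 : ℝ), s ^ (β - 1) * Real.exp (-s) * s ^ m = Real.Gamma (β + m) := by
  rw [Real.Gamma_eq_integral (by positivity)]
  exact setIntegral_congr_fun measurableSet_Ioi (rpow_mul_exp_neg_mul_pow_eqOn β m)

theorem Lop_eval_eq_aeval_derivative (n : ℕ) {α : ℝ} (hβ : 0 < α + n) {q : ℝ[X]} {N : ℕ}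
    (hq : q.natDegree ≤ N) (x : ℝ) :
    Lop n α (fun t => q.eval t) x
      = (aeval (derivative : Module.End ℝ ℝ[X])
          (trunc (N + 1) (oneSubPow (-(α + n)))) q).eval x := by
  have htaylor (s : ℝ) :
      q.eval (x + s) = ∑ m ∈ range (N + 1), (hasseDeriv m q).eval x * s ^ m := by
    rw [add_comm, ← taylor_eval,
      eval_eq_sum_range' ((natDegree_taylor q x).trans_lt (Nat.lt_succ_of_le hq))]
    simp only [taylor_coeff]
  have hintegrand : (fun s : ℝ => s ^ (α + n - 1) * Real.exp (-s) * q.eval (x + s)) =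
      fun s => ∑ m ∈ range (N + 1),
        (hasseDeriv m q).eval x * (s ^ (α + n - 1) * Real.exp (-s) * s ^ m) := by
    ext s
    rw [htaylor, mul_sum]
    exact sum_congr rfl fun m _ => by ring
  have hD (m : ℕ) : derivative^[m] q = m.factorial • hasseDeriv m q :=
    (congrFun (factorial_smul_hasseDeriv (R := ℝ) (k := m)) q).symm
  rw [Lop, hintegrand, integral_finsetSum _ fun m _ =>
      (integrableOn_rpow_mul_exp_neg_mul_pow hβ m).const_mul _,
    aeval_derivative_apply_eq_sum_range' (PowerSeries.natDegree_trunc_lt _ _), eval_finsetSum,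
    mul_sum]
  refine sum_congr rfl fun m hm => ?_
  rw [integral_const_mul, integral_rpow_mul_exp_neg_mul_pow hβ, Real.Gamma_add_nat hβ,
    PowerSeries.coeff_trunc, if_pos (mem_range.1 hm), coeff_oneSubPow_neg, eval_smul, hD,
    eval_smul, nsmul_eq_mul, smul_eq_mul]
  field_simp

/-- If `p_k` is a monic polynomial of degree `k` and
`P_k = ∑_{j=0}^k (-1)^j binom(α+n, j) p_k^{(j)}`, then `P_k` is a monic polynomial of
degree `k` and `L(P_k) = p_k`. -/
theorem Lop_inverse_on_monic
    (n : ℕ) (hn : 1 ≤ n) (α : ℝ) (hα : -1 < α)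
    (k : ℕ) (p : Polynomial ℝ) (hp : p.Monic) (hdeg : p.natDegree = k)
    (P : Polynomial ℝ)
    (hP : P = ∑ j ∈ Finset.range (k + 1),
      Polynomial.C ((-1 : ℝ) ^ j * gbinom (α + n) j) * Polynomial.derivative^[j] p) :
    P.Monic ∧ P.natDegree = k ∧ ∀ x : ℝ, Lop n α (fun t => P.eval t) x = p.eval x := by
  have hβ : 0 < α + n := by
    have : (1 : ℝ) ≤ n := by exact_mod_cast hn
    linarith
  have hlower := degree_sum_C_mul_iterate_derivative_succ_lt hp.ne_zero
    (fun i => (-1 : ℝ) ^ (i + 1) * gbinom (α + n) (i + 1)) (range k)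
  have hPp : P = ∑ i ∈ range k, C ((-1 : ℝ) ^ (i + 1) * gbinom (α + n) (i + 1)) *
      derivative^[i + 1] p + p := by
    simp [hP, sum_range_succ' _ k, gbinom]
  have hPdeg : P.natDegree = k := by rw [hPp, natDegree_add_eq_right_of_degree_lt hlower, hdeg]
  refine ⟨hPp ▸ hp.add_of_right hlower, hPdeg, fun x => ?_⟩
  have hPaeval :
      P = aeval (derivative : Module.End ℝ ℝ[X]) (trunc (k + 1) (oneSubPow (α + n))) p := by
    rw [hP, aeval_derivative_apply_eq_sum_range' (PowerSeries.natDegree_trunc_lt _ _)]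
    refine sum_congr rfl fun j hj => ?_
    rw [PowerSeries.coeff_trunc, if_pos (mem_range.1 hj), PowerSeries.coeff_oneSubPow,
      gbinom_eq_choose, C_mul']
  rw [Lop_eval_eq_aeval_derivative n hβ hPdeg.le, hPaeval, ← Module.End.mul_apply, ← map_mul,
    aeval_derivative_apply_eq_of_X_pow_dvd_sub
      (PowerSeries.X_pow_dvd_trunc_oneSubPow_neg_mul_trunc_oneSubPow_sub_one _ k)
      (hdeg.trans_lt k.lt_succ_self), map_one, Module.End.one_apply]
end
end
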